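/- Let n ≥ 4 with 2n+1 ≡ 0 (mod 3), and let k = (2n+1)/3. Any acyclic k-coloring of C⃗_{2n+1}⟨n⟩ all of whose color classes are forbidden triangles (sets of the form {i, i+n, i+n+1}) is an isolated vertex in the k-dicoloring graph: changing the color of any single vertex never yields an acyclic coloring. -/

import Mathlib

/-- A set `S` of vertices induces an acyclic subdigraph of the digraph with
arc relation `A`: there is no directed cycle within `S`. -/
def AcyclicOn {V : Type*} (A : V → V → Prop) (S : Set V) : Prop :=
  ∀ v, ¬ Relation.TransGen (fun x y => x ∈ S ∧ y ∈ S ∧ A x y) v v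

/-- An acyclic `k`-coloring: every color class induces an acyclic subdigraph. -/
def IsAcyclicColoring {V : Type*} (A : V → V → Prop) (k : ℕ) (α : V → Fin k) : Prop :=
  ∀ c : Fin k, AcyclicOn A {v | α v = c}

/-- The `k`-dicoloring graph: vertices are acyclic `k`-colorings, two colorings
adjacent when they differ on exactly one vertex. -/
def DicolGraph {V : Type*} (A : V → V → Prop) (k : ℕ) :
    SimpleGraph {α : V → Fin k // IsAcyclicColoring A k α} where
  Adj α β := ∃! v, α.1 v ≠ β.1 v
  symm := by
    constructor
    rintro α β ⟨v, hv, hu⟩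
    exact ⟨v, Ne.symm hv, fun w hw => hu w (Ne.symm hw)⟩
  loopless := by
    constructor
    rintro α ⟨v, hv, -⟩
    exact hv rfl

/-- The cyclic circulant tournament on `ZMod (2n+1)` with jumps `1,…,n`. -/
def CycArc (n : ℕ) (a b : ZMod (2*n+1)) : Prop := (b - a).val ∈ Finset.Icc 1 n

/-- The tournament obtained from `CycArc n` by reversing the jump `n`. -/
def RevArc (n : ℕ) (a b : ZMod (2*n+1)) : Prop :=
  (b - a).val ∈ Finset.Icc 1 (n-1) ∨ (b - a).val = n + 1

/-- A forbidden triangle in `C_{2n+1}⟨n⟩`. -/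
def ForbiddenTriangle (n : ℕ) (S : Set (ZMod (2*n+1))) : Prop :=
  ∃ i : ZMod (2*n+1), S = {i, i + n, i + n + 1}


/-!
Recolouring a single vertex `w` to colour `c` makes `w` join the colour class of `c`, which
is a forbidden triangle `{i, i + n, i + n + 1}`. Writing `w = i + e`, one of the directed
triangles `i → w → i + n → i` (if `e < n`) or `i → i + n + 1 → w → i` (if `e > n + 1`)
then lies in the new class, so the new colouring is not acyclic.
-/

theorem AcyclicOn.mono {V : Type*} {A : V → V → Prop} {S T : Set V}
    (hS : AcyclicOn A S) (hTS : T ⊆ S) : AcyclicOn A T :=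
  fun v hv => hS v <| Relation.TransGen.mono (fun _ _ h => ⟨hTS h.1, hTS h.2.1, h.2.2⟩) v v hv

theorem not_acyclicOn_of_arcs {V : Type*} {A : V → V → Prop} {S : Set V} {a b c : V}
    (ha : a ∈ S) (hb : b ∈ S) (hc : c ∈ S) (hab : A a b) (hbc : A b c) (hca : A c a) :
    ¬ AcyclicOn A S :=
  fun hS => hS a <| .head ⟨ha, hb, hab⟩ <| .head ⟨hb, hc, hbc⟩ <| .single ⟨hc, ha, hca⟩

theorem DicolGraph.not_adj_of_not_acyclicOn_insert {V : Type*} {A : V → V → Prop} {k : ℕ}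
    {α : V → Fin k} (hα : IsAcyclicColoring A k α)
    (hins : ∀ c v, α v ≠ c → ¬ AcyclicOn A (insert v {u | α u = c})) :
    ∀ β, ¬ (DicolGraph A k).Adj ⟨α, hα⟩ β := by
  rintro ⟨β, hβ⟩ ⟨w, hw, huniq⟩
  refine hins (β w) w hw ((hβ (β w)).mono ?_)
  rintro u (rfl | hu)
  · rfl
  · by_cases hαβ : α u = β u
    · exact (hαβ ▸ hu : β u = β w)
    · exact congrArg β (huniq u hαβ)

section RevArc

variable {n : ℕ}

theorem revArc_of_eq_add_natCast {a b : ZMod (2*n+1)} {d : ℕ} (hab : b = a + d) (hn : 0 < n)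
    (hd : 1 ≤ d ∧ d ≤ n - 1 ∨ d = n + 1) : RevArc n a b := by
  rw [RevArc, hab, add_sub_cancel_left, ZMod.val_natCast_of_lt (by omega), Finset.mem_Icc]
  exact hd

theorem not_acyclicOn_insert_forbiddenTriangle {S : Set (ZMod (2*n+1))}
    (hS : ForbiddenTriangle n S) {v : ZMod (2*n+1)} (hv : v ∉ S) :
    ¬ AcyclicOn (RevArc n) (insert v S) := by
  obtain ⟨i, rfl⟩ := hS
  set e := (v - i).val
  have hve : v = i + e := by rw [ZMod.natCast_zmod_val, add_sub_cancel]
  have he_lt : e < 2*n+1 := ZMod.val_lt _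
  have hzero : ((2*n+1 : ℕ) : ZMod (2*n+1)) = 0 := ZMod.natCast_self _
  push_cast at hzero
  have he₀ : e ≠ 0 := fun h => hv (by simp [hve, h])
  have hen : e ≠ n := fun h => hv (by simp [hve, h])
  have hen₁ : e ≠ n + 1 := fun h => hv (by simp [hve, h, add_assoc])
  have hn : 0 < n := by omega
  have hi : i ∈ insert v ({i, i + n, i + n + 1} : Set _) := by simp
  have hin : i + n ∈ insert v ({i, i + n, i + n + 1} : Set _) := by simp
  have hin₁ : i + n + 1 ∈ insert v ({i, i + n, i + n + 1} : Set _) := by simp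
  have hvS : v ∈ insert v ({i, i + n, i + n + 1} : Set _) := Set.mem_insert _ _
  rcases Nat.lt_or_gt_of_ne hen with he | he
  · refine not_acyclicOn_of_arcs hi hvS hin (revArc_of_eq_add_natCast hve hn (by omega))
      (revArc_of_eq_add_natCast (d := n - e) ?_ hn (by omega))
      (revArc_of_eq_add_natCast (d := n + 1) ?_ hn (by omega))
    · rw [hve, Nat.cast_sub he.le]; ring
    · push_cast; linear_combination -hzero
  · refine not_acyclicOn_of_arcs hi hin₁ hvS
      (revArc_of_eq_add_natCast (d := n + 1) (by push_cast; ring) hn (by omega))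
      (revArc_of_eq_add_natCast (d := e - (n + 1)) ?_ hn (by omega))
      (revArc_of_eq_add_natCast (d := 2*n+1 - e) ?_ hn (by omega))
    · rw [hve, Nat.cast_sub (by omega)]; push_cast; ring
    · rw [hve, Nat.cast_sub he_lt.le]; push_cast; linear_combination -hzero

end RevArc

theorem stmt17_general (n k : ℕ)
    (α : ZMod (2*n+1) → Fin k) (hα : IsAcyclicColoring (RevArc n) k α)
    (hft : ∀ c : Fin k, ForbiddenTriangle n {v | α v = c}) :
    ∀ w, ¬ (DicolGraph (RevArc n) k).Adj ⟨α, hα⟩ w :=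
  DicolGraph.not_adj_of_not_acyclicOn_insert hα fun c _ hv =>
    not_acyclicOn_insert_forbiddenTriangle (hft c) hv

theorem stmt17 (n k : ℕ) (hn : 4 ≤ n) (hk : 3 * k = 2*n + 1)
    (α : ZMod (2*n+1) → Fin k) (hα : IsAcyclicColoring (RevArc n) k α)
    (hft : ∀ c : Fin k, ForbiddenTriangle n {v | α v = c}) :
    ∀ w, ¬ (DicolGraph (RevArc n) k).Adj ⟨α, hα⟩ w :=
  stmt17_general n k α hα hft
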